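/- arXiv:1410.2491 — 2 statements merged into one kernel-verified Lean document; each statement's English description precedes it below -/
import Mathlib

section
/- Let α>0, 0<β<1, and let m be the (σ-finite Borel) measure on (0,∞)×(0,∞) having density (x,y) ↦ α x^{−(α+1)} β y^{β−1} with respect to two-dimensional Lebesgue measure. Then for every a>0, the pushforward of m under the map (x,y) ↦ (x, y/a) equals the pushforward of m under the map (x,y) ↦ (a^{β/α} x, y), and both pushforwards equal a^β · m. -/
open MeasureTheory
open scoped ENNReal

/-- The mean measure `m(dx,dy) = α x^{−(α+1)} dx · β y^{β−1} dy` on `(0,∞)²`. -/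
noncomputable def meanMeasure (α β : ℝ) : Measure (ℝ × ℝ) :=
  ((volume : Measure (ℝ × ℝ)).restrict (Set.Ioi 0 ×ˢ Set.Ioi 0)).withDensity
    (fun p => ENNReal.ofReal (α * p.1 ^ (-(α + 1)) * (β * p.2 ^ (β - 1))))

/-- Scale the first coordinate, as a measurable equivalence. -/
noncomputable def scaleFst (c : ℝ) (hc : c ≠ 0) : (ℝ × ℝ) ≃ᵐ (ℝ × ℝ) where
  toEquiv :=
    { toFun := fun p => (c * p.1, p.2)
      invFun := fun p => (c⁻¹ * p.1, p.2)
      left_inv := fun p => by simp [inv_mul_cancel_left₀ hc]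
      right_inv := fun p => by simp [mul_inv_cancel_left₀ hc] }
  measurable_toFun := ((measurable_const_mul c).comp measurable_fst).prodMk measurable_snd
  measurable_invFun := ((measurable_const_mul c⁻¹).comp measurable_fst).prodMk measurable_snd

/-- Scale the second coordinate, as a measurable equivalence. -/
noncomputable def scaleSnd (c : ℝ) (hc : c ≠ 0) : (ℝ × ℝ) ≃ᵐ (ℝ × ℝ) where
  toEquiv :=
    { toFun := fun p => (p.1, c * p.2)
      invFun := fun p => (p.1, c⁻¹ * p.2)
      left_inv := fun p => by simp [inv_mul_cancel_left₀ hc]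
      right_inv := fun p => by simp [mul_inv_cancel_left₀ hc] }
  measurable_toFun := measurable_fst.prodMk ((measurable_const_mul c).comp measurable_snd)
  measurable_invFun := measurable_fst.prodMk ((measurable_const_mul c⁻¹).comp measurable_snd)

lemma smul_prod_meas {α β : Type*} [MeasurableSpace α] [MeasurableSpace β]
    (c : ℝ≥0∞) (μ : Measure α) (ν : Measure β) [SFinite μ] [SFinite ν] :
    (c • μ).prod ν = c • μ.prod ν := by
  ext s hs
  rw [Measure.prod_apply hs, Measure.smul_apply, Measure.prod_apply hs,
    lintegral_smul_measure]

lemma prod_smul_meas {α β : Type*} [MeasurableSpace α] [MeasurableSpace β]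
    (c : ℝ≥0∞) (hc : c ≠ ∞) (μ : Measure α) (ν : Measure β) [SFinite μ] [SFinite ν] :
    μ.prod (c • ν) = c • μ.prod ν := by
  ext s hs
  rw [Measure.prod_apply hs, Measure.smul_apply, Measure.prod_apply hs]
  simp_rw [Measure.smul_apply, smul_eq_mul]
  rw [lintegral_const_mul' _ _ hc]

lemma withDensity_map_equiv {α β : Type*} [MeasurableSpace α] [MeasurableSpace β]
    (μ : Measure α) (e : α ≃ᵐ β) (f : β → ℝ≥0∞) :
    Measure.map e (μ.withDensity (fun x => f (e x))) = (Measure.map e μ).withDensity f := by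
  ext s hs
  rw [Measure.map_apply e.measurable hs, withDensity_apply _ (e.measurable hs),
    withDensity_apply _ hs, Measure.restrict_map e.measurable hs,
    lintegral_map_equiv]

lemma preimage_scaleFst (c : ℝ) (hc : 0 < c) :
    (fun p : ℝ × ℝ => (c * p.1, p.2)) ⁻¹' (Set.Ioi 0 ×ˢ Set.Ioi 0)
      = (Set.Ioi 0 ×ˢ Set.Ioi 0 : Set (ℝ × ℝ)) := by
  ext p
  simp only [Set.mem_preimage, Set.mem_prod, Set.mem_Ioi]
  constructor
  · rintro ⟨h1, h2⟩
    refine ⟨?_, h2⟩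
    have := div_pos h1 hc
    rwa [mul_div_cancel_left₀ _ hc.ne'] at this
  · rintro ⟨h1, h2⟩
    exact ⟨mul_pos hc h1, h2⟩

lemma preimage_scaleSnd (c : ℝ) (hc : 0 < c) :
    (fun p : ℝ × ℝ => (p.1, c * p.2)) ⁻¹' (Set.Ioi 0 ×ˢ Set.Ioi 0)
      = (Set.Ioi 0 ×ˢ Set.Ioi 0 : Set (ℝ × ℝ)) := by
  ext p
  simp only [Set.mem_preimage, Set.mem_prod, Set.mem_Ioi]
  constructor
  · rintro ⟨h1, h2⟩
    refine ⟨h1, ?_⟩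
    have := div_pos h2 hc
    rwa [mul_div_cancel_left₀ _ hc.ne'] at this
  · rintro ⟨h1, h2⟩
    exact ⟨h1, mul_pos hc h2⟩

lemma base_map_fst (c : ℝ) (hc : 0 < c) :
    Measure.map (fun p : ℝ × ℝ => (c * p.1, p.2))
        ((volume : Measure (ℝ × ℝ)).restrict (Set.Ioi 0 ×ˢ Set.Ioi 0))
      = ENNReal.ofReal c⁻¹ •
        ((volume : Measure (ℝ × ℝ)).restrict (Set.Ioi 0 ×ˢ Set.Ioi 0)) := by
  have hS : MeasurableSet (Set.Ioi (0:ℝ) ×ˢ Set.Ioi (0:ℝ)) :=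
    measurableSet_Ioi.prod measurableSet_Ioi
  have hf : Measurable (fun p : ℝ × ℝ => (c * p.1, p.2)) :=
    ((measurable_const_mul c).comp measurable_fst).prodMk measurable_snd
  have hvol : (volume : Measure (ℝ × ℝ)).map (fun p => (c * p.1, p.2))
      = ENNReal.ofReal c⁻¹ • (volume : Measure (ℝ × ℝ)) := by
    have heq : (fun p : ℝ × ℝ => (c * p.1, p.2)) = Prod.map (fun x : ℝ => c * x) id := rfl
    rw [heq, Measure.volume_eq_prod,
      ← Measure.map_prod_map _ _ (measurable_const_mul c) measurable_id,
      Measure.map_id, Real.map_volume_mul_left hc.ne',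
      abs_of_pos (inv_pos.mpr hc), smul_prod_meas, ← Measure.volume_eq_prod]
  calc Measure.map (fun p : ℝ × ℝ => (c * p.1, p.2))
        ((volume : Measure (ℝ × ℝ)).restrict (Set.Ioi 0 ×ˢ Set.Ioi 0))
      = Measure.map (fun p : ℝ × ℝ => (c * p.1, p.2))
        ((volume : Measure (ℝ × ℝ)).restrict
          ((fun p : ℝ × ℝ => (c * p.1, p.2)) ⁻¹' (Set.Ioi 0 ×ˢ Set.Ioi 0))) := by
        rw [preimage_scaleFst c hc]
    _ = ((volume : Measure (ℝ × ℝ)).map (fun p : ℝ × ℝ => (c * p.1, p.2))).restrict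
          (Set.Ioi 0 ×ˢ Set.Ioi 0) := (Measure.restrict_map hf hS).symm
    _ = ENNReal.ofReal c⁻¹ •
        ((volume : Measure (ℝ × ℝ)).restrict (Set.Ioi 0 ×ˢ Set.Ioi 0)) := by
        rw [hvol, Measure.restrict_smul]

lemma base_map_snd (c : ℝ) (hc : 0 < c) :
    Measure.map (fun p : ℝ × ℝ => (p.1, c * p.2))
        ((volume : Measure (ℝ × ℝ)).restrict (Set.Ioi 0 ×ˢ Set.Ioi 0))
      = ENNReal.ofReal c⁻¹ •
        ((volume : Measure (ℝ × ℝ)).restrict (Set.Ioi 0 ×ˢ Set.Ioi 0)) := by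
  have hS : MeasurableSet (Set.Ioi (0:ℝ) ×ˢ Set.Ioi (0:ℝ)) :=
    measurableSet_Ioi.prod measurableSet_Ioi
  have hf : Measurable (fun p : ℝ × ℝ => (p.1, c * p.2)) :=
    measurable_fst.prodMk ((measurable_const_mul c).comp measurable_snd)
  have hvol : (volume : Measure (ℝ × ℝ)).map (fun p => (p.1, c * p.2))
      = ENNReal.ofReal c⁻¹ • (volume : Measure (ℝ × ℝ)) := by
    have heq : (fun p : ℝ × ℝ => (p.1, c * p.2)) = Prod.map id (fun x : ℝ => c * x) := rfl
    rw [heq, Measure.volume_eq_prod,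
      ← Measure.map_prod_map _ _ measurable_id (measurable_const_mul c),
      Measure.map_id, Real.map_volume_mul_left hc.ne',
      abs_of_pos (inv_pos.mpr hc), prod_smul_meas _ ENNReal.ofReal_ne_top,
      ← Measure.volume_eq_prod]
  calc Measure.map (fun p : ℝ × ℝ => (p.1, c * p.2))
        ((volume : Measure (ℝ × ℝ)).restrict (Set.Ioi 0 ×ˢ Set.Ioi 0))
      = Measure.map (fun p : ℝ × ℝ => (p.1, c * p.2))
        ((volume : Measure (ℝ × ℝ)).restrict
          ((fun p : ℝ × ℝ => (p.1, c * p.2)) ⁻¹' (Set.Ioi 0 ×ˢ Set.Ioi 0))) := by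
        rw [preimage_scaleSnd c hc]
    _ = ((volume : Measure (ℝ × ℝ)).map (fun p : ℝ × ℝ => (p.1, c * p.2))).restrict
          (Set.Ioi 0 ×ˢ Set.Ioi 0) := (Measure.restrict_map hf hS).symm
    _ = ENNReal.ofReal c⁻¹ •
        ((volume : Measure (ℝ × ℝ)).restrict (Set.Ioi 0 ×ˢ Set.Ioi 0)) := by
        rw [hvol, Measure.restrict_smul]

/-- Scaling identity underlying the self-similarity (with exponent `H = β/α`) of the random
sup measure `W_{α,β}`: for every `a>0`, pushing `m` forward by `(x,y) ↦ (x, y/a)` gives the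
same measure as pushing it forward by `(x,y) ↦ (a^{β/α} x, y)`, and both equal `a^β · m`. -/
theorem meanMeasure_scaling (α β a : ℝ) (hα : 0 < α) (hβ0 : 0 < β) (hβ1 : β < 1) (ha : 0 < a) :
    Measure.map (fun p : ℝ × ℝ => (p.1, p.2 / a)) (meanMeasure α β)
        = Measure.map (fun p : ℝ × ℝ => (a ^ (β / α) * p.1, p.2)) (meanMeasure α β)
      ∧ Measure.map (fun p : ℝ × ℝ => (p.1, p.2 / a)) (meanMeasure α β)
        = ENNReal.ofReal (a ^ β) • meanMeasure α β
      ∧ Measure.map (fun p : ℝ × ℝ => (a ^ (β / α) * p.1, p.2)) (meanMeasure α β)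
        = ENNReal.ofReal (a ^ β) • meanMeasure α β := by
  have hS : MeasurableSet (Set.Ioi (0:ℝ) ×ˢ Set.Ioi (0:ℝ)) :=
    measurableSet_Ioi.prod measurableSet_Ioi
  set μ0 : Measure (ℝ × ℝ) :=
    (volume : Measure (ℝ × ℝ)).restrict (Set.Ioi 0 ×ˢ Set.Ioi 0) with hμ0
  -- first-coordinate scaling
  have key3 : Measure.map (fun p : ℝ × ℝ => (a ^ (β / α) * p.1, p.2)) (meanMeasure α β)
      = ENNReal.ofReal (a ^ β) • meanMeasure α β := by
    set c : ℝ := a ^ (β / α) with hc_def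
    have hc : 0 < c := Real.rpow_pos_of_pos ha _
    set e := scaleFst c hc.ne' with he
    set G : ℝ × ℝ → ℝ≥0∞ :=
      fun q => ENNReal.ofReal (α * (c⁻¹ * q.1) ^ (-(α + 1)) * (β * q.2 ^ (β - 1))) with hG
    have hinv : (c⁻¹ : ℝ) ^ (-(α + 1)) = c ^ (α + 1) := by
      rw [← Real.rpow_neg_one c, ← Real.rpow_mul hc.le]
      norm_num
    have hFG : meanMeasure α β = μ0.withDensity (fun p => G (e p)) := by
      unfold meanMeasure
      congr 1
      funext p
      show ENNReal.ofReal (α * p.1 ^ (-(α + 1)) * (β * p.2 ^ (β - 1)))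
        = ENNReal.ofReal (α * (c⁻¹ * (c * p.1)) ^ (-(α + 1)) * (β * p.2 ^ (β - 1)))
      rw [inv_mul_cancel_left₀ hc.ne']
    have hGdens : μ0.withDensity G = ENNReal.ofReal (c ^ (α + 1)) • meanMeasure α β := by
      rw [meanMeasure, ← hμ0, ← withDensity_smul' _ _ ENNReal.ofReal_ne_top]
      apply withDensity_congr_ae
      refine (ae_restrict_iff' hS).2 (Filter.Eventually.of_forall fun p hp => ?_)
      obtain ⟨hx, hy⟩ := hp
      simp only [Pi.smul_apply, smul_eq_mul, hG]
      rw [Real.mul_rpow (inv_nonneg.mpr hc.le) (le_of_lt hx), hinv,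
        ← ENNReal.ofReal_mul (Real.rpow_nonneg hc.le _)]
      congr 1
      ring
    calc Measure.map (fun p : ℝ × ℝ => (c * p.1, p.2)) (meanMeasure α β)
        = Measure.map (⇑e) (μ0.withDensity (fun p => G (e p))) := by rw [← hFG]; rfl
      _ = (Measure.map (⇑e) μ0).withDensity G := withDensity_map_equiv μ0 e G
      _ = (ENNReal.ofReal c⁻¹ • μ0).withDensity G := by
          have : Measure.map (⇑e) μ0 = ENNReal.ofReal c⁻¹ • μ0 := base_map_fst c hc
          rw [this]
      _ = ENNReal.ofReal c⁻¹ • (μ0.withDensity G) := withDensity_smul_measure _ _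
      _ = ENNReal.ofReal c⁻¹ • (ENNReal.ofReal (c ^ (α + 1)) • meanMeasure α β) := by
          rw [hGdens]
      _ = ENNReal.ofReal (a ^ β) • meanMeasure α β := by
          rw [smul_smul, ← ENNReal.ofReal_mul (inv_nonneg.mpr hc.le)]
          congr 1
          have h1 : c⁻¹ * c ^ (α + 1) = c ^ α := by
            rw [← Real.rpow_neg_one c, ← Real.rpow_add hc]
            norm_num
          rw [h1, hc_def, ← Real.rpow_mul ha.le, div_mul_cancel₀ β hα.ne']
  -- second-coordinate scaling
  have key2 : Measure.map (fun p : ℝ × ℝ => (p.1, p.2 / a)) (meanMeasure α β)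
      = ENNReal.ofReal (a ^ β) • meanMeasure α β := by
    have hfun : (fun p : ℝ × ℝ => (p.1, p.2 / a)) = fun p : ℝ × ℝ => (p.1, a⁻¹ * p.2) := by
      funext p
      rw [div_eq_inv_mul]
    rw [hfun]
    have hd : (0:ℝ) < a⁻¹ := inv_pos.mpr ha
    set e := scaleSnd a⁻¹ hd.ne' with he
    set G : ℝ × ℝ → ℝ≥0∞ :=
      fun q => ENNReal.ofReal (α * q.1 ^ (-(α + 1)) * (β * (a * q.2) ^ (β - 1))) with hG
    have hFG : meanMeasure α β = μ0.withDensity (fun p => G (e p)) := by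
      unfold meanMeasure
      congr 1
      funext p
      show ENNReal.ofReal (α * p.1 ^ (-(α + 1)) * (β * p.2 ^ (β - 1)))
        = ENNReal.ofReal (α * p.1 ^ (-(α + 1)) * (β * (a * (a⁻¹ * p.2)) ^ (β - 1)))
      rw [mul_inv_cancel_left₀ ha.ne']
    have hGdens : μ0.withDensity G = ENNReal.ofReal (a ^ (β - 1)) • meanMeasure α β := by
      rw [meanMeasure, ← hμ0, ← withDensity_smul' _ _ ENNReal.ofReal_ne_top]
      apply withDensity_congr_ae
      refine (ae_restrict_iff' hS).2 (Filter.Eventually.of_forall fun p hp => ?_)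
      obtain ⟨hx, hy⟩ := hp
      simp only [Pi.smul_apply, smul_eq_mul, hG]
      rw [Real.mul_rpow ha.le (le_of_lt hy),
        ← ENNReal.ofReal_mul (Real.rpow_nonneg ha.le _)]
      congr 1
      ring
    calc Measure.map (fun p : ℝ × ℝ => (p.1, a⁻¹ * p.2)) (meanMeasure α β)
        = Measure.map (⇑e) (μ0.withDensity (fun p => G (e p))) := by rw [← hFG]; rfl
      _ = (Measure.map (⇑e) μ0).withDensity G := withDensity_map_equiv μ0 e G
      _ = (ENNReal.ofReal a • μ0).withDensity G := by
          have h2 : Measure.map (⇑e) μ0 = ENNReal.ofReal (a⁻¹)⁻¹ • μ0 := base_map_snd a⁻¹ hd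
          rw [h2, inv_inv]
      _ = ENNReal.ofReal a • (μ0.withDensity G) := withDensity_smul_measure _ _
      _ = ENNReal.ofReal a • (ENNReal.ofReal (a ^ (β - 1)) • meanMeasure α β) := by
          rw [hGdens]
      _ = ENNReal.ofReal (a ^ β) • meanMeasure α β := by
          rw [smul_smul, ← ENNReal.ofReal_mul ha.le]
          congr 1
          have h3 : a ^ ((1:ℝ) + (β - 1)) = a ^ (1:ℝ) * a ^ (β - 1) := Real.rpow_add ha 1 (β - 1)
          rw [Real.rpow_one] at h3
          rw [← h3]
          norm_num
  exact ⟨key2.trans key3.symm, key2, key3⟩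
end

section
/- Let m : 𝒢 → [0,∞] be a sup measure on [0,∞), i.e., m(∅)=0 and m(⋃_{r∈R} G_r) = sup_{r∈R} m(G_r) for every family (G_r, r∈R) of open subsets of [0,∞). Then m = i∨(d∨m); that is, for every open G ⊆ [0,∞), m(G) = sup_{t∈G} d∨m(t), where d∨m(t) = inf{ m(G') : G' open, t ∈ G' }. -/
open scoped ENNReal

/-- If `m` is a sup measure on `[0,∞)` (i.e., `m(∅)=0` and `m(⋃_r G_r) = sup_r m(G_r)` for
every family of open sets), then `m = i∨(d∨m)`: for every open `G`,
`m(G) = sup_{t∈G} d∨m(t)` where `d∨m(t) = inf { m(G') : G' open, t ∈ G' }`. -/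
theorem supMeasure_eq_supIntegral_supDerivative
    (m : Set (Set.Ici (0 : ℝ)) → ℝ≥0∞)
    (h_empty : m ∅ = 0)
    (h_sup : ∀ (ι : Type) (G : ι → Set (Set.Ici (0 : ℝ))),
      (∀ r, IsOpen (G r)) → m (⋃ r, G r) = ⨆ r, m (G r)) :
    ∀ G : Set (Set.Ici (0 : ℝ)), IsOpen G →
      m G = ⨆ t ∈ G,
        ⨅ (G' : Set (Set.Ici (0 : ℝ))) (_ : IsOpen G') (_ : t ∈ G'), m G' := by
  have mono : ∀ A B : Set (Set.Ici (0 : ℝ)), IsOpen A → IsOpen B → A ⊆ B → m A ≤ m B := by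
    intro A B hA hB hAB
    have hu : (⋃ b : Bool, if b then A else B) = B := by
      ext x
      simp only [Set.mem_iUnion]
      constructor
      · rintro ⟨b, hb⟩; cases b <;> simp_all; exact hAB hb
      · intro hx; exact ⟨false, hx⟩
    have h := h_sup Bool (fun b => if b then A else B) (by intro b; cases b <;> simpa)
    rw [hu] at h
    rw [h]
    exact le_iSup_of_le true (by simp)
  intro G hG
  set d : Set.Ici (0 : ℝ) → ℝ≥0∞ :=
    fun t => ⨅ (G' : Set (Set.Ici (0 : ℝ))) (_ : IsOpen G') (_ : t ∈ G'), m G' with hd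
  rcases G.eq_empty_or_nonempty with rfl | hne
  · simp [h_empty]
  have hGne : Nonempty ↥G := hne.to_subtype
  apply le_antisymm
  · apply ENNReal.le_of_forall_pos_le_add
    intro ε hε hlt
    have hchoice : ∀ t : ↥G, ∃ G' : Set (Set.Ici (0 : ℝ)),
        IsOpen G' ∧ (t : Set.Ici (0 : ℝ)) ∈ G' ∧ m G' ≤ d t + ε := by
      rintro ⟨t, ht⟩
      have hdt : d t < ⊤ := lt_of_le_of_lt (le_biSup d ht) hlt
      have hlt' : d t < d t + ε := ENNReal.lt_add_right hdt.ne (by exact_mod_cast hε.ne')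
      have := hlt'
      rw [hd] at this
      simp only [iInf_lt_iff] at this
      obtain ⟨G', hO, hmem, hm⟩ := this
      exact ⟨G', hO, hmem, hm.le⟩
    choose Gt hGtO hGtmem hGtle using hchoice
    have hunion : (⋃ t : ↥G, (G ∩ Gt t)) = G := by
      apply Set.Subset.antisymm
      · exact Set.iUnion_subset fun t => Set.inter_subset_left
      · intro x hx
        exact Set.mem_iUnion.2 ⟨⟨x, hx⟩, hx, hGtmem ⟨x, hx⟩⟩
    have h := h_sup ↥G (fun t => G ∩ Gt t) (fun t => hG.inter (hGtO t))
    rw [hunion] at h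
    rw [h]
    have : ∀ t : ↥G, m (G ∩ Gt t) ≤ d t + ε := fun t =>
      le_trans (mono _ _ (hG.inter (hGtO t)) (hGtO t) Set.inter_subset_right) (hGtle t)
    calc ⨆ t : ↥G, m (G ∩ Gt t) ≤ ⨆ t : ↥G, (d t + ε) := iSup_mono this
      _ = (⨆ t : ↥G, d t) + ε := by rw [ENNReal.iSup_add]
      _ = (⨆ t ∈ G, d t) + ε := by rw [iSup_subtype']
  · refine iSup₂_le fun t ht => ?_
    exact iInf_le_of_le G (iInf_le_of_le hG (iInf_le_of_le ht le_rfl))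
end
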